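/- arXiv:1902.03757 — 2 statements merged into one kernel-verified Lean document; each statement's English description precedes it below -/
import Mathlib

section
/- Let G be a connected topological group acting continuously on the circle S^1. Then either the action is transitive, or there exists a point of S^1 fixed by every element of G. -/
/-!
The orbit of a point is connected; if it is not the whole circle it is an arc, whose frontier
is finite and nonempty. The frontier is invariant, so the connected group acts continuously on
a finite set and therefore fixes each of its points.
-/

open Set Topology MulAction

theorem Set.OrdConnected.frontier_finite {α : Type*} [LinearOrder α] [TopologicalSpace α]
    [OrderTopology α] {s : Set α} (hs : s.OrdConnected) : (frontier s).Finite := by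
  have hsub : frontier s ⊆ {x | IsGLB s x} ∪ {x | IsLUB s x} := by
    intro x hx
    by_contra hbound
    simp only [mem_union, mem_ofPred_eq, not_or] at hbound
    obtain ⟨a, ha, hax⟩ : ∃ a ∈ s, a < x := by
      by_contra! h
      exact hbound.1 (isGLB_of_mem_closure h (frontier_subset_closure hx))
    obtain ⟨b, hb, hxb⟩ : ∃ b ∈ s, x < b := by
      by_contra! h
      exact hbound.2 (isLUB_of_mem_closure h (frontier_subset_closure hx))
    have hnhds : s ∈ 𝓝 x := Filter.mem_of_superset (Ioo_mem_nhds hax hxb)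
      (Ioo_subset_Icc_self.trans (hs.out ha hb))
    exact hx.2 (mem_interior_iff_mem_nhds.mpr hnhds)
  refine Finite.subset (Finite.union ?_ ?_) hsub
  · exact Subsingleton.finite fun _ h _ h' => h.unique h'
  · exact Subsingleton.finite fun _ h _ h' => h.unique h'

theorem OpenPartialHomeomorph.target_inter_frontier_finite {α X : Type*} [LinearOrder α]
    [TopologicalSpace α] [OrderTopology α] [TopologicalSpace X] (e : OpenPartialHomeomorph α X)
    {O : Set X} (hO : IsPreconnected O) (hOe : O ⊆ e.target) : (e.target ∩ frontier O).Finite := by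
  have himage : e.IsImage (e.source ∩ e ⁻¹' O) O := fun _ hx => ⟨fun h => ⟨hx, h⟩, And.right⟩
  have hconn : IsPreconnected (e.source ∩ e ⁻¹' O) := by
    rw [← e.symm_image_eq_source_inter_preimage hOe]
    exact hO.image _ (e.continuousOn_symm.mono hOe)
  rw [← himage.frontier.image_eq]
  exact (hconn.ordConnected.frontier_finite.inter_of_right _).image _

theorem Circle.exists_openPartialHomeomorph_target_eq (p : Circle) :
    ∃ e : OpenPartialHomeomorph ℝ Circle, e.target = {p}ᶜ := by
  have : Fact (0 < 2 * Real.pi) := ⟨Real.two_pi_pos⟩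
  refine ⟨(AddCircle.openPartialHomeomorphCoe (2 * Real.pi) (Complex.arg p)).transHomeomorph
    AddCircle.homeomorphCircle', ?_⟩
  ext z
  simp only [OpenPartialHomeomorph.transHomeomorph_target,
    AddCircle.openPartialHomeomorphCoe_target, mem_preimage, mem_compl_singleton_iff, not_iff_not]
  rw [Homeomorph.symm_apply_eq, AddCircle.homeomorphCircle'_apply_mk, Circle.exp_arg]

theorem Circle.frontier_finite_of_isPreconnected {O : Set Circle} (hO : IsPreconnected O)
    (hOne : O ≠ univ) : (frontier O).Finite := by
  obtain ⟨p, hp⟩ := (ne_univ_iff_exists_notMem O).mp hOne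
  obtain ⟨e, he⟩ := exists_openPartialHomeomorph_target_eq p
  have hOe : O ⊆ e.target := fun z hz => he ▸ ne_of_mem_of_not_mem hz hp
  refine ((e.target_inter_frontier_finite hO hOe).insert p).subset fun z hz => ?_
  by_cases hzp : z = p
  · exact .inl hzp
  · exact .inr ⟨he ▸ hzp, hz⟩

theorem MulAction.fixedPoints_nonempty_of_frontier_orbit_finite {G X : Type*} [Group G]
    [TopologicalSpace G] [PreconnectedSpace G] [TopologicalSpace X] [PreconnectedSpace X]
    [T1Space X] [MulAction G X] [ContinuousSMul G X] {x : X} (hx : orbit G x ≠ univ)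
    (hfin : (frontier (orbit G x)).Finite) : (fixedPoints G X).Nonempty := by
  obtain ⟨z, hz⟩ := nonempty_frontier_iff.mpr ⟨⟨x, mem_orbit_self x⟩, hx⟩
  have hinv : ∀ g : G, g • z ∈ frontier (orbit G x) := by
    intro g
    have : Homeomorph.smul g '' frontier (orbit G x) = frontier (orbit G x) :=
      ((Homeomorph.smul g).image_frontier _).trans (congrArg frontier (smul_orbit g x))
    exact this ▸ mem_image_of_mem _ hz
  refine ⟨z, fun g => ?_⟩
  have hconst : g • z = (1 : G) • z := isPreconnected_univ.constant_of_mapsTo hfin.isDiscrete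
    (continuous_id.smul continuous_const).continuousOn (fun g _ => hinv g) (mem_univ g) (mem_univ 1)
  rwa [one_smul] at hconst

theorem stmt0_general {G : Type*} [TopologicalSpace G] [Group G]
    [ConnectedSpace G]
    (φ : G → Circle → Circle)
    (hcont : Continuous fun p : G × Circle => φ p.1 p.2)
    (hone : ∀ x, φ 1 x = x)
    (hmul : ∀ g h x, φ (g * h) x = φ g (φ h x)) :
    (∀ x y : Circle, ∃ g : G, φ g x = y) ∨ (∃ x : Circle, ∀ g : G, φ g x = x) := by
  let _ : MulAction G Circle := { smul := φ, one_smul := hone, mul_smul := hmul }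
  have _ : ContinuousSMul G Circle := ⟨hcont⟩
  refine or_iff_not_imp_left.mpr fun htrans => ?_
  simp only [not_forall, not_exists] at htrans
  obtain ⟨x, y, hy⟩ := htrans
  have horbit : orbit G x ≠ univ := fun h => by
    obtain ⟨g, hg⟩ : y ∈ orbit G x := h ▸ mem_univ y
    exact hy g hg
  have hconn : IsPreconnected (orbit G x) :=
    isPreconnected_range (continuous_id.smul continuous_const)
  exact fixedPoints_nonempty_of_frontier_orbit_finite horbit
    (Circle.frontier_finite_of_isPreconnected hconn horbit)

/-- A connected topological group acting continuously on the circle S¹ either acts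
transitively or has a common fixed point. -/
theorem stmt0 {G : Type*} [TopologicalSpace G] [Group G] [IsTopologicalGroup G]
    [ConnectedSpace G]
    (φ : G → Circle → Circle)
    (hcont : Continuous fun p : G × Circle => φ p.1 p.2)
    (hone : ∀ x, φ 1 x = x)
    (hmul : ∀ g h x, φ (g * h) x = φ g (φ h x)) :
    (∀ x y : Circle, ∃ g : G, φ g x = y) ∨ (∃ x : Circle, ∀ g : G, φ g x = x) :=
  stmt0_general φ hcont hone hmul
end

section
/- Let g: ℝ^d → M be given by g(t₁,…,t_d) = φ_d^{t_d} ∘ ⋯ ∘ φ_1^{t_1}(q₀), where φ_i denotes the flow of a complete smooth vector field X_i on a smooth d-manifold M, and suppose g is a local diffeomorphism at (τ₁,…,τ_d). Set q₁ = g(τ₁,…,τ_d). Then h: ℝ^d → M given by h(t₁,…,t_d) = φ_1^{−t₁} ∘ ⋯ ∘ φ_d^{−t_d}(q₁) is also a local diffeomorphism at (τ₁,…,τ_d). -/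
/-!
Write `Φ(t, q) = φ_d^{t_d} ∘ ⋯ ∘ φ_1^{t_1}(q)`, so that `g = Φ(·, q₀)` and
`h t = Φ(t, ·)⁻¹(q₁)`, i.e. `Φ(t, h t) = q₁` for all `t`, with `h τ = q₀`. Differentiating this
identity at `τ` gives `dg_τ + d(Φ(τ, ·))_{q₀} ∘ dh_τ = 0`. The first term is invertible by
hypothesis and `Φ(τ, ·)` is a diffeomorphism, so `dh_τ = -(d(Φ(τ, ·))_{q₀})⁻¹ ∘ dg_τ` is
invertible, and the inverse function theorem makes `h` a local diffeomorphism at `τ`.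
-/

open scoped Manifold
open Set Filter Topology Function

section LocalDiffeomorph

variable {𝕜 : Type*} [NontriviallyNormedField 𝕜]
  {E : Type*} [NormedAddCommGroup E] [NormedSpace 𝕜 E]
  {F : Type*} [NormedAddCommGroup F] [NormedSpace 𝕜 F]
  {H : Type*} [TopologicalSpace H] {H' : Type*} [TopologicalSpace H']
  {I : ModelWithCorners 𝕜 E H} {J : ModelWithCorners 𝕜 F H'}
  {M : Type*} [TopologicalSpace M] [ChartedSpace H M]
  {N : Type*} [TopologicalSpace N] [ChartedSpace H' N] {n : WithTop ℕ∞}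

theorem IsLocalDiffeomorphAt.congr_of_eventuallyEq {f g : M → N} {x : M}
    (hg : IsLocalDiffeomorphAt I J n g x) (hfg : f =ᶠ[𝓝 x] g) :
    IsLocalDiffeomorphAt I J n f x := by
  obtain ⟨Φ, hxΦ, hgΦ⟩ := hg
  obtain ⟨U, hUfg, hU, hxU⟩ := mem_nhds_iff.1 hfg
  let Ψ := Φ.toOpenPartialHomeomorph.restrOpen U hU
  exact ⟨⟨Ψ.toPartialEquiv, Ψ.open_source, Ψ.open_target,
    Φ.contMDiffOn_toFun.mono inter_subset_left, Φ.contMDiffOn_invFun.mono inter_subset_left⟩,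
    ⟨hxΦ, hxU⟩, fun y hy => (hUfg hy.2).trans (hgΦ hy.1)⟩

variable [IsManifold I n M]

theorem isLocalDiffeomorphAt_chartAt {x₀ x : M} (hx : x ∈ (chartAt H x₀).source) :
    IsLocalDiffeomorphAt I I n (chartAt H x₀) x :=
  ⟨⟨(chartAt H x₀).toPartialEquiv, (chartAt H x₀).open_source, (chartAt H x₀).open_target,
    contMDiffOn_chart, contMDiffOn_chart_symm⟩, hx, eqOn_refl _ _⟩

theorem isLocalDiffeomorphAt_chartAt_symm {x₀ : M} {y : H} (hy : y ∈ (chartAt H x₀).target) :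
    IsLocalDiffeomorphAt I I n (chartAt H x₀).symm y :=
  ⟨⟨(chartAt H x₀).symm.toPartialEquiv, (chartAt H x₀).open_target, (chartAt H x₀).open_source,
    contMDiffOn_chart_symm, contMDiffOn_chart⟩, hy, eqOn_refl _ _⟩

end LocalDiffeomorph

section InverseFunctionTheorem

variable {𝕜 : Type*} [RCLike 𝕜]
  {E : Type*} [NormedAddCommGroup E] [NormedSpace 𝕜 E] [CompleteSpace E]
  {F : Type*} [NormedAddCommGroup F] [NormedSpace 𝕜 F] {n : WithTop ℕ∞}

theorem isLocalDiffeomorphAt_of_hasFDerivAt {f : E → F} {f' : E ≃L[𝕜] F} {s : Set E} {x : E}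
    (hs : s ∈ 𝓝 x) (hf : ContDiffOn 𝕜 n f s) (hn : n ≠ 0)
    (hf' : HasFDerivAt f (f' : E →L[𝕜] F) x) :
    IsLocalDiffeomorphAt 𝓘(𝕜, E) 𝓘(𝕜, F) n f x := by
  have hxU : x ∈ interior s := mem_interior_iff_mem_nhds.2 hs
  have hfU : ContDiffOn 𝕜 n f (interior s) := hf.mono interior_subset
  -- On `V` the derivative stays invertible, so the local inverse is smooth on all of its domain.
  let V := interior s ∩ fderiv 𝕜 f ⁻¹' range ((↑) : (E ≃L[𝕜] F) → E →L[𝕜] F)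
  have hV : IsOpen V :=
    (hfU.continuousOn_fderiv_of_isOpen isOpen_interior (ENat.one_le_iff_ne_zero_withTop.2 hn))
      |>.isOpen_inter_preimage isOpen_interior ContinuousLinearEquiv.isOpen
  have hfx : ContDiffAt 𝕜 n f x := hfU.contDiffAt (isOpen_interior.mem_nhds hxU)
  let P := (hfx.toOpenPartialHomeomorph f hf' hn).restrOpen V hV
  refine ⟨⟨P.toPartialEquiv, P.open_source, P.open_target, ?_, ?_⟩,
    ⟨hfx.mem_toOpenPartialHomeomorph_source hf' hn, hxU, f', hf'.fderiv.symm⟩, fun _ _ => rfl⟩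
  · exact (hfU.mono fun y hy => hy.2.1).contMDiffOn
  · intro z ⟨hz, hzU, e, he⟩
    have hfz : ContDiffAt 𝕜 n f (P.symm z) := hfU.contDiffAt (isOpen_interior.mem_nhds hzU)
    have hf'z : HasFDerivAt f (e : E →L[𝕜] F) (P.symm z) :=
      he ▸ (hfz.differentiableAt hn).hasFDerivAt
    exact (OpenPartialHomeomorph.contDiffAt_symm _ hz hf'z hfz).contMDiffAt.contMDiffWithinAt

variable {M : Type*} [TopologicalSpace M] [ChartedSpace E M] [IsManifold 𝓘(𝕜, E) n M]
  {N : Type*} [TopologicalSpace N] [ChartedSpace F N] [IsManifold 𝓘(𝕜, F) n N]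

theorem isLocalDiffeomorphAt_of_hasMFDerivAt {f : M → N} {f' : E ≃L[𝕜] F} {s : Set M} {x : M}
    (hs : s ∈ 𝓝 x) (hf : ContMDiffOn 𝓘(𝕜, E) 𝓘(𝕜, F) n f s) (hn : n ≠ 0)
    (hf' : HasMFDerivAt 𝓘(𝕜, E) 𝓘(𝕜, F) f x (f' : E →L[𝕜] F)) :
    IsLocalDiffeomorphAt 𝓘(𝕜, E) 𝓘(𝕜, F) n f x := by
  set cx := chartAt E x
  set cy := chartAt F (f x)
  have hxs : x ∈ cx.source := mem_chart_source E x
  have hfxs : f x ∈ cy.source := mem_chart_source F (f x)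
  have hfcy : f ⁻¹' cy.source ∈ 𝓝 x :=
    (hf.contMDiffAt hs).continuousAt.preimage_mem_nhds (cy.open_source.mem_nhds hfxs)
  let fc := cy ∘ f ∘ cx.symm
  let U := cx.target ∩ cx.symm ⁻¹' (s ∩ f ⁻¹' cy.source)
  have hfc : ContMDiffOn 𝓘(𝕜, E) 𝓘(𝕜, F) n fc U :=
    contMDiffOn_chart.comp
      (hf.comp (contMDiffOn_chart_symm.mono inter_subset_left) fun y hy => hy.2.1)
      fun y hy => hy.2.2
  have hU : U ∈ 𝓝 (cx x) := by
    have hxt : cx x ∈ cx.target := cx.map_source hxs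
    refine inter_mem (cx.open_target.mem_nhds hxt) ((cx.continuousAt_symm hxt).preimage_mem_nhds ?_)
    rw [cx.left_inv hxs]
    exact inter_mem hs hfcy
  have hfc' : HasFDerivAt fc (f' : E →L[𝕜] F) (cx x) := by
    have hwritten := hf'.2
    rw [modelWithCornersSelf_coe, range_id] at hwritten
    exact hasFDerivWithinAt_univ.1 hwritten
  have hfcx : cy (f x) = fc (cx x) := by simp only [fc, comp_apply, cx.left_inv hxs]
  have hcomp := ((isLocalDiffeomorphAt_chartAt hxs).comp _ _
    (isLocalDiffeomorphAt_of_hasFDerivAt hU hfc.contDiffOn hn hfc')).comp _ _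
    (isLocalDiffeomorphAt_chartAt_symm (x₀ := f x)
      (by rw [comp_apply, ← hfcx]; exact cy.map_source hfxs))
  refine hcomp.congr_of_eventuallyEq ?_
  filter_upwards [cx.open_source.mem_nhds hxs, hfcy] with y hy hfy
  change f y = cy.symm (cy (f (cx.symm (cx y))))
  rw [cx.left_inv hy, cy.left_inv hfy]

variable {G : Type*} [NormedAddCommGroup G] [NormedSpace 𝕜 G]
  {H : Type*} [TopologicalSpace H] {J : ModelWithCorners 𝕜 G H}
  {P : Type*} [TopologicalSpace P] [ChartedSpace H P]

theorem isLocalDiffeomorphAt_of_eventually_apply_prodMk_eq {Φ : M × N → P} {h : M → N}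
    {s : Set M} {τ : M} (hs : s ∈ 𝓝 τ) (hh : ContMDiffOn 𝓘(𝕜, E) 𝓘(𝕜, F) n h s) (hn : n ≠ 0)
    (hΦ : MDifferentiableAt (𝓘(𝕜, E).prod 𝓘(𝕜, F)) J Φ (τ, h τ))
    (hΦ₁ : IsLocalDiffeomorphAt 𝓘(𝕜, E) J n (fun t => Φ (t, h τ)) τ)
    (hΦ₂ : IsLocalDiffeomorphAt 𝓘(𝕜, F) J n (fun q => Φ (τ, q)) (h τ))
    (hconst : ∀ᶠ t in 𝓝 τ, Φ (t, h t) = Φ (τ, h τ)) :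
    IsLocalDiffeomorphAt 𝓘(𝕜, E) 𝓘(𝕜, F) n h τ := by
  have hhd : MDifferentiableAt 𝓘(𝕜, E) 𝓘(𝕜, F) h τ := (hh.contMDiffAt hs).mdifferentiableAt hn
  set A := hΦ₁.mfderivToContinuousLinearEquiv hn
  set B := hΦ₂.mfderivToContinuousLinearEquiv hn
  have hchain : HasMFDerivAt 𝓘(𝕜, E) J (fun t => Φ (t, h t)) τ
      ((mfderiv (𝓘(𝕜, E).prod 𝓘(𝕜, F)) J Φ (τ, h τ)).comp
        ((ContinuousLinearMap.id 𝕜 E).prod (mfderiv 𝓘(𝕜, E) 𝓘(𝕜, F) h τ))) :=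
    hΦ.hasMFDerivAt.comp τ ((hasMFDerivAt_id τ).prodMk hhd.hasMFDerivAt)
  have hzero : HasMFDerivAt 𝓘(𝕜, E) J (fun t => Φ (t, h t)) τ 0 :=
    (hasMFDerivAt_const _ τ).congr_of_eventuallyEq hconst
  have hsum (v : E) : A v + B (mfderiv 𝓘(𝕜, E) 𝓘(𝕜, F) h τ v) = 0 :=
    (mfderiv_prod_eq_add_apply hΦ).symm.trans
      (DFunLike.congr_fun (hasMFDerivAt_unique hchain hzero) v)
  let e : E ≃L[𝕜] F := (A.trans B.symm).trans (ContinuousLinearEquiv.neg 𝕜)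
  have hdh : mfderiv 𝓘(𝕜, E) 𝓘(𝕜, F) h τ = (e : E →L[𝕜] F) := by
    ext v
    change _ = -B.symm (A v)
    rw [← B.symm_apply_apply (mfderiv 𝓘(𝕜, E) 𝓘(𝕜, F) h τ v),
      eq_neg_of_add_eq_zero_right (hsum v), map_neg]
  exact isLocalDiffeomorphAt_of_hasMFDerivAt hs hh hn (hdh ▸ hhd.hasMFDerivAt)

end InverseFunctionTheorem

section FlowComposition

theorem List.foldl_foldr_cancel {α X : Type*} {f f' : α → X → X}
    (hf : ∀ a, LeftInverse (f a) (f' a)) (l : List α) (x : X) :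
    l.foldl (fun y a => f a y) (l.foldr f' x) = x := by
  induction l generalizing x with
  | nil => rfl
  | cons a l ih => simp only [List.foldr_cons, List.foldl_cons, hf a _, ih]

theorem List.foldr_foldl_cancel {α X : Type*} {f f' : α → X → X}
    (hf : ∀ a, LeftInverse (f' a) (f a)) (l : List α) (x : X) :
    l.foldr f' (l.foldl (fun y a => f a y) x) = x := by
  induction l generalizing x with
  | nil => rfl
  | cons a l ih => simp only [List.foldr_cons, List.foldl_cons, ih, hf a _]

theorem leftInverse_apply_neg {T X : Type*} [AddGroup T] {φ : T → X → X} (h0 : φ 0 = id)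
    (hadd : ∀ s t, φ (s + t) = φ s ∘ φ t) (t : T) : LeftInverse (φ t) (φ (-t)) := fun x => by
  rw [← comp_apply (f := φ t), ← hadd, add_neg_cancel, h0, id]

variable {X : Type*} {d : ℕ} (φ : Fin d → ℝ → X → X)

def flowComp (p : EuclideanSpace ℝ (Fin d) × X) : X :=
  (List.ofFn fun i => (i, p.1 i)).foldl (fun x q => φ q.1 q.2 x) p.2

def flowCompInv (p : EuclideanSpace ℝ (Fin d) × X) : X :=
  (List.ofFn fun i => (i, p.1 i)).foldr (fun q x => φ q.1 (-q.2) x) p.2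

variable {φ}

theorem flowComp_flowCompInv (hφ0 : ∀ i, φ i 0 = id)
    (hφadd : ∀ i s t, φ i (s + t) = φ i s ∘ φ i t) (t : EuclideanSpace ℝ (Fin d)) (x : X) :
    flowComp φ (t, flowCompInv φ (t, x)) = x :=
  List.foldl_foldr_cancel (fun a : Fin d × ℝ => leftInverse_apply_neg (hφ0 a.1) (hφadd a.1) a.2)
    _ x

theorem flowCompInv_flowComp (hφ0 : ∀ i, φ i 0 = id)
    (hφadd : ∀ i s t, φ i (s + t) = φ i s ∘ φ i t) (t : EuclideanSpace ℝ (Fin d)) (x : X) :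
    flowCompInv φ (t, flowComp φ (t, x)) = x :=
  List.foldr_foldl_cancel (fun a : Fin d × ℝ => by
    simpa only [neg_neg] using leftInverse_apply_neg (hφ0 a.1) (hφadd a.1) (-a.2)) _ x

end FlowComposition

section SmoothFlowComposition

variable {ι : Type*} [Fintype ι] {E : Type*} [NormedAddCommGroup E] [NormedSpace ℝ E]
  {H : Type*} [TopologicalSpace H] {I : ModelWithCorners ℝ E H}
  {M : Type*} [TopologicalSpace M] [ChartedSpace H M] {n : WithTop ℕ∞}

theorem contMDiff_foldl_flows {φ : ι → ℝ → M → M}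
    (hφ : ∀ i, ContMDiff (𝓘(ℝ).prod I) I n fun p : ℝ × M => φ i p.1 p.2) (l : List ι) :
    ContMDiff (𝓘(ℝ, EuclideanSpace ℝ ι).prod I) I n fun p : EuclideanSpace ℝ ι × M =>
      (l.map fun i => (i, p.1 i)).foldl (fun x q => φ q.1 q.2 x) p.2 := by
  induction l with
  | nil => exact contMDiff_snd
  | cons i l ih =>
    exact ih.comp (contMDiff_fst.prodMk
      ((hφ i).comp (((EuclideanSpace.proj i).contMDiff.comp contMDiff_fst).prodMk contMDiff_snd)))

theorem contMDiff_foldr_flows_neg {φ : ι → ℝ → M → M}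
    (hφ : ∀ i, ContMDiff (𝓘(ℝ).prod I) I n fun p : ℝ × M => φ i p.1 p.2) (l : List ι) :
    ContMDiff (𝓘(ℝ, EuclideanSpace ℝ ι).prod I) I n fun p : EuclideanSpace ℝ ι × M =>
      (l.map fun i => (i, p.1 i)).foldr (fun q x => φ q.1 (-q.2) x) p.2 := by
  induction l with
  | nil => exact contMDiff_snd
  | cons i l ih =>
    exact (hφ i).comp (((EuclideanSpace.proj i).contMDiff.comp contMDiff_fst).neg.prodMk ih)

variable {d : ℕ} {φ : Fin d → ℝ → M → M}

theorem contMDiff_flowComp (hφ : ∀ i, ContMDiff (𝓘(ℝ).prod I) I n fun p : ℝ × M => φ i p.1 p.2) :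
    ContMDiff ((𝓡 d).prod I) I n (flowComp φ) := by
  unfold flowComp
  simpa only [List.ofFn_eq_map] using contMDiff_foldl_flows hφ (List.finRange d)

theorem contMDiff_flowCompInv
    (hφ : ∀ i, ContMDiff (𝓘(ℝ).prod I) I n fun p : ℝ × M => φ i p.1 p.2) :
    ContMDiff ((𝓡 d).prod I) I n (flowCompInv φ) := by
  unfold flowCompInv
  simpa only [List.ofFn_eq_map] using contMDiff_foldr_flows_neg hφ (List.finRange d)

def flowCompDiffeomorph (hφ0 : ∀ i, φ i 0 = id) (hφadd : ∀ i s t, φ i (s + t) = φ i s ∘ φ i t)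
    (hφ : ∀ i, ContMDiff (𝓘(ℝ).prod I) I n fun p : ℝ × M => φ i p.1 p.2)
    (t : EuclideanSpace ℝ (Fin d)) : M ≃ₘ^n⟮I, I⟯ M where
  toFun q := flowComp φ (t, q)
  invFun q := flowCompInv φ (t, q)
  left_inv := flowCompInv_flowComp hφ0 hφadd t
  right_inv := flowComp_flowCompInv hφ0 hφadd t
  contMDiff_toFun := (contMDiff_flowComp hφ).comp (contMDiff_const.prodMk contMDiff_id)
  contMDiff_invFun := (contMDiff_flowCompInv hφ).comp (contMDiff_const.prodMk contMDiff_id)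

end SmoothFlowComposition

/-- If `g(t₁,…,t_d) = φ_d^{t_d} ∘ ⋯ ∘ φ_1^{t_1}(q₀)` is a local diffeomorphism at
`(τ₁,…,τ_d)` with `q₁ = g(τ₁,…,τ_d)`, then the reverse composition
`h(t₁,…,t_d) = φ_1^{-t₁} ∘ ⋯ ∘ φ_d^{-t_d}(q₁)` is also a local diffeomorphism there. -/
theorem stmt15 {d : ℕ} {M : Type*} [TopologicalSpace M]
    [ChartedSpace (EuclideanSpace ℝ (Fin d)) M]
    [IsManifold (𝓡 d) (⊤ : ℕ∞) M]
    (φ : Fin d → ℝ → M → M)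
    (hφ0 : ∀ i, φ i 0 = id)
    (hφadd : ∀ i s t, φ i (s + t) = φ i s ∘ φ i t)
    (hφsmooth : ∀ i, ContMDiff ((𝓘(ℝ, ℝ)).prod (𝓡 d)) (𝓡 d) (⊤ : ℕ∞)
      (fun p : ℝ × M => φ i p.1 p.2))
    (q₀ : M) (τv : EuclideanSpace ℝ (Fin d))
    (g : EuclideanSpace ℝ (Fin d) → M)
    (hg : ∀ t, g t = (List.ofFn fun i : Fin d => (i, t i)).foldl
      (fun x p => φ p.1 p.2 x) q₀)
    (q₁ : M) (hq₁ : q₁ = g τv)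
    (h : EuclideanSpace ℝ (Fin d) → M)
    (hh : ∀ t, h t = (List.ofFn fun i : Fin d => (i, t i)).foldr
      (fun p x => φ p.1 (-p.2) x) q₁)
    (hgdiffeo : IsLocalDiffeomorphAt (𝓡 d) (𝓡 d) (⊤ : ℕ∞) g τv) :
    IsLocalDiffeomorphAt (𝓡 d) (𝓡 d) (⊤ : ℕ∞) h τv := by
  have hg' : g = fun t => flowComp φ (t, q₀) := funext hg
  have hh' : h = fun t => flowCompInv φ (t, q₁) := funext hh
  have hhτ : h τv = q₀ := by rw [hh', hq₁, hg']; exact flowCompInv_flowComp hφ0 hφadd τv q₀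
  have hh_smooth : ContMDiff (𝓡 d) (𝓡 d) (⊤ : ℕ∞) h :=
    hh' ▸ (contMDiff_flowCompInv hφsmooth).comp (contMDiff_id.prodMk contMDiff_const)
  refine isLocalDiffeomorphAt_of_eventually_apply_prodMk_eq univ_mem hh_smooth.contMDiffOn
    (by simp) ((contMDiff_flowComp hφsmooth).mdifferentiableAt (by simp)) ?_
    ((flowCompDiffeomorph hφ0 hφadd hφsmooth τv).isLocalDiffeomorph (h τv)) ?_
  · rwa [hhτ, ← hg']
  · filter_upwards with t
    rw [hh', flowComp_flowCompInv hφ0 hφadd, flowComp_flowCompInv hφ0 hφadd]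
end
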